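/- Let t be a periodic increment array of size s with period π(t) < s and stride d = n·π(t)/s (a divisor of n), and let W be any set of d agents with consecutive identifiers modulo n. Then the map x ↦ C(x, t) restricted to W is injective, and its image is exactly the set of all distinct coalitions generated by t, i.e., { C(x, t) : x ∈ W } = ⋃_{i=1}^{n} {C(i, t)}, a set of exactly d coalitions. Hence every distinct coalition generated by t is computed by exactly one agent of W. -/

import Mathlib

/-!
The coalition of agent `a + 1` is the image in `{1, …, n}` of the translate `a + S` of the offset
set `S = {φ_1, …, φ_s} ⊆ ℤ/nℤ`, so two coalitions coincide iff the difference of their starting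
agents stabilises `S`. Lifted to `ℕ`, `S` is enumerated by the partial sums of the cyclically
repeated gaps `t_k + 1`; a translation by `c` preserving `S` shifts this enumeration by a fixed
number `m` of indices, which makes `m` a period of the gap sequence and hence a multiple of `π(t)`.
So the stabiliser of `S` consists of the multiples of `d = φ_{π(t)+1} = n·π(t)/s`: coalitions are
indexed by the residue of the starting agent mod `d`, and `d` consecutive agents meet each residue
exactly once.
-/

namespace NDCA

/-- `t` is an increment array (IA) of size `s` for `n` agents:
a tuple of non-negative integers of length `s` with sum `n - s`. -/
def IsIA (n s : ℕ) (t : List ℕ) : Prop :=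
  t.length = s ∧ t.sum = n - s

/-- Cumulative increment `φ_i` (1-indexed): `φ_1 = 0`, and
`φ_i = Σ_{k=0}^{i-2} (t_k + 1)` for `2 ≤ i`. -/
def phi (t : List ℕ) (i : ℕ) : ℕ := (t.take (i - 1)).sum + (i - 1)

/-- The coalition generated by increment array `t` from starting agent `x`:
`C(x,t) = { ((x - 1 + φ_i) mod n) + 1 : 1 ≤ i ≤ s }`. -/
def coal (n x : ℕ) (t : List ℕ) : Finset ℕ :=
  (Finset.Icc 1 t.length).image (fun i => (x - 1 + phi t i) % n + 1)

/-- The collection of coalitions generated by `t` as the starting agent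
ranges over `{1, …, n}`. -/
def gen (n : ℕ) (t : List ℕ) : Finset (Finset ℕ) :=
  (Finset.Icc 1 n).image (fun x => coal n x t)

/-- `u` is a circular shift of `t`: `u = ⟨t_k, …, t_{s-1}, t_0, …, t_{k-1}⟩`
for some `0 ≤ k ≤ s - 1`. -/
def ShiftEquiv (t u : List ℕ) : Prop :=
  ∃ k, k < t.length ∧ u = t.rotate k

/-- `p` is a period of `t`: `1 ≤ p`, `p ∣ |t|`, and `t` consists of
`|t|/p` identical copies of its first `p` entries. -/
def IsPeriodOf (t : List ℕ) (p : ℕ) : Prop :=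
  1 ≤ p ∧ p ∣ t.length ∧ t = (List.replicate (t.length / p) (t.take p)).flatten

/-- The period `π(t)`: the smallest `p` that is a period of `t`. -/
noncomputable def period (t : List ℕ) : ℕ := sInf {p | IsPeriodOf t p}

end NDCA

open Finset Function
open scoped Pointwise

theorem List.getElem_flatten_replicate {α : Type*} (l : List α) (r k : ℕ)
    (hk : k < ((List.replicate r l).flatten).length) :
    ((List.replicate r l).flatten)[k] =
      l[k % l.length]'(Nat.mod_lt _ (List.length_pos_of_ne_nil (by rintro rfl; simp at hk))) := by
  have h := List.ofFn_fin_repeat (fun i : Fin l.length => l[i]) r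
  simp only [Fin.getElem_fin, List.ofFn_getElem] at h
  simp only [← h, List.getElem_ofFn, Fin.repeat, Fin.modNat]

theorem Function.Periodic.nat_gcd {α : Type*} {f : ℕ → α} {a b : ℕ} (ha : Periodic f a)
    (hb : Periodic f b) : Periodic f (a.gcd b) := by
  induction a, b using Nat.gcd.induction with
  | H0 b => simpa using hb
  | H1 a b _ ih =>
    rw [Nat.gcd_rec]
    refine ih (fun k => ?_) ha
    have hq := ha.nat_mul (b / a)
    rw [Nat.cast_id] at hq
    rw [← hq (k + b % a), add_assoc, Nat.mod_add_div', hb]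

theorem StrictMono.exists_forall_add_eq_add {f : ℕ → ℕ} (hf : StrictMono f) (h0 : f 0 = 0)
    {c : ℕ} (hc : ∀ x, x ∈ Set.range f ↔ x + c ∈ Set.range f) :
    ∃ m, ∀ k, f (k + m) = f k + c := by
  obtain ⟨m, hm⟩ := (hc 0).1 ⟨0, h0⟩
  rw [zero_add] at hm
  -- both sides enumerate `range f ∩ [c, ∞)` increasingly
  have hshift : StrictMono fun k => f (k + m) := fun a b hab => hf (by omega)
  refine ⟨m, congrFun ((hshift.range_inj (hf.add_const c)).1 (Set.ext fun y => ⟨?_, ?_⟩))⟩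
  · rintro ⟨k, rfl⟩
    have hle : c ≤ f (k + m) := hm ▸ hf.monotone (Nat.le_add_left m k)
    obtain ⟨j, hj⟩ := (hc (f (k + m) - c)).2 (by rw [Nat.sub_add_cancel hle]; exact ⟨_, rfl⟩)
    exact ⟨j, show f j + c = f (k + m) by omega⟩
  · rintro ⟨k, rfl⟩
    obtain ⟨l, hl⟩ := (hc (f k)).1 ⟨k, rfl⟩
    have hml : m ≤ l := hf.le_iff_le.1 (by omega)
    exact ⟨l - m, by simp only [Nat.sub_add_cancel hml, hl]⟩

theorem ZMod.dvd_val_neg_add_iff_modEq {n d : ℕ} [NeZero n] (hd : d ∣ n) (a b : ℕ) :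
    d ∣ (-(a : ZMod n) + b).val ↔ a ≡ b [MOD d] := by
  rw [← ZMod.natCast_eq_zero_iff, ← ZMod.cast_eq_val, ← ZMod.castHom_apply (h := hd), map_add,
    map_neg, map_natCast, map_natCast, neg_add_eq_zero, ZMod.natCast_eq_natCast_iff]

namespace Finset

theorem image_add_one_range (m : ℕ) : (range m).image (· + 1) = Icc 1 m := by
  rw [range_eq_Ico, image_add_right_Ico, zero_add, Ico_add_one_right_eq_Icc]

theorem image_mod_range {m d : ℕ} (hd : 0 < d) (hdm : d ≤ m) :
    (range m).image (· % d) = range d := by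
  ext r
  simp only [mem_image, mem_range]
  exact ⟨by rintro ⟨a, -, rfl⟩; exact Nat.mod_lt a hd,
    fun hr => ⟨r, hr.trans_le hdm, Nat.mod_eq_of_lt hr⟩⟩

theorem injOn_add_mod (h d : ℕ) : Set.InjOn (fun k => (h + k) % d) (range d) :=
  fun _ hk _ hk' hkk' => (Nat.ModEq.add_left_cancel' h hkk').eq_of_lt_of_lt (mem_range.1 hk)
    (mem_range.1 hk')

theorem image_add_mod_range (h d : ℕ) : (range d).image (fun k => (h + k) % d) = range d :=
  eq_of_subset_of_card_le
    (fun r hr => by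
      obtain ⟨k, hk, rfl⟩ := mem_image.1 hr
      exact mem_range.2 (Nat.mod_lt _ (Nat.zero_lt_of_lt (mem_range.1 hk))))
    (card_image_of_injOn (injOn_add_mod h d)).ge

section

variable {β : Type*} {f : ℕ → β} {d : ℕ} (hf : ∀ a b, f a = f b ↔ a ≡ b [MOD d])
include hf

theorem image_eq_image_of_image_mod_eq [DecidableEq β] {A B : Finset ℕ}
    (h : A.image (· % d) = B.image (· % d)) : A.image f = B.image f := by
  have hmod (A : Finset ℕ) : A.image f = (A.image (· % d)).image f := by
    rw [image_image]
    exact image_congr fun a _ => (hf _ _).2 (Nat.mod_modEq a d).symm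
  rw [hmod A, hmod B, h]

theorem injOn_image_add_mod {n : ℕ} (hdn : d ∣ n) (h : ℕ) :
    Set.InjOn f ((range d).image fun k => (h + k) % n) := by
  rintro _ hx _ hy hxy
  obtain ⟨k, hk, rfl⟩ := mem_image.1 hx
  obtain ⟨k', hk', rfl⟩ := mem_image.1 hy
  have hkk' := (hf _ _).1 hxy
  rw [Nat.ModEq, Nat.mod_mod_of_dvd _ hdn, Nat.mod_mod_of_dvd _ hdn] at hkk'
  rw [injOn_add_mod h d hk hk' hkk']

theorem image_image_add_mod_eq_image_range [DecidableEq β] {n : ℕ} (hn : 0 < n) (hdn : d ∣ n)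
    (h : ℕ) : ((range d).image fun k => (h + k) % n).image f = (range n).image f := by
  refine image_eq_image_of_image_mod_eq hf ?_
  rw [image_image, image_mod_range (Nat.pos_of_dvd_of_pos hdn hn) (Nat.le_of_dvd hn hdn)]
  simp only [comp_def, Nat.mod_mod_of_dvd _ hdn, image_add_mod_range]

theorem card_image_range_eq [DecidableEq β] {n : ℕ} (hd : 0 < d) (hdn : d ≤ n) :
    ((range n).image f).card = d := by
  rw [image_eq_image_of_image_mod_eq hf (B := range d)
      (by rw [image_mod_range hd hdn, image_mod_range hd le_rfl]),
    card_image_of_injOn fun a ha b hb hab => ((hf a b).1 hab).eq_of_lt_of_lt (mem_range.1 ha)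
      (mem_range.1 hb), card_range]

end

end Finset

namespace NDCA

def cyclic (t : List ℕ) (k : ℕ) : ℕ := t.getD (k % t.length) 0

variable {n : ℕ} {t : List ℕ}

theorem cyclic_periodic_length (t : List ℕ) : Periodic (cyclic t) t.length := fun k => by
  simp [cyclic]

theorem isPeriodOf_iff (ht : t ≠ []) {q : ℕ} :
    IsPeriodOf t q ↔ 0 < q ∧ q ∣ t.length ∧ Periodic (cyclic t) q := by
  refine and_congr_right fun hq => and_congr_right fun hqs => ?_
  have hqt : q ≤ t.length := Nat.le_of_dvd (List.length_pos_of_ne_nil ht) hqs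
  have hlen : ((List.replicate (t.length / q) (t.take q)).flatten).length = t.length := by
    simp [Nat.min_eq_left hqt, Nat.div_mul_cancel hqs]
  have hmod : ∀ k, k % t.length % q = k % q := fun k => Nat.mod_mod_of_dvd k hqs
  calc t = (List.replicate (t.length / q) (t.take q)).flatten
      ↔ ∀ k (hk : k < t.length), t[k] = t[k % q]'((Nat.mod_lt k hq).trans_le hqt) := by
        rw [List.ext_getElem_iff]
        simp [hlen, List.getElem_flatten_replicate, Nat.min_eq_left hqt]
    _ ↔ Periodic (cyclic t) q := by
        constructor
        · intro h k
          have hk : (k + q) % t.length < t.length := Nat.mod_lt _ (List.length_pos_of_ne_nil ht)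
          have hk' : k % t.length < t.length := Nat.mod_lt _ (List.length_pos_of_ne_nil ht)
          simp only [cyclic, List.getD_eq_getElem _ _ hk, List.getD_eq_getElem _ _ hk', h _ hk,
            h _ hk', hmod, Nat.add_mod_right]
        · intro h k hk
          have := h.map_mod_nat k
          have hkq : k % q < t.length := (Nat.mod_lt k hq).trans_le hqt
          simpa only [cyclic, Nat.mod_eq_of_lt hk, Nat.mod_eq_of_lt hkq,
            List.getD_eq_getElem _ _ hk, List.getD_eq_getElem _ _ hkq] using this.symm

theorem isPeriodOf_period (ht : t ≠ []) : IsPeriodOf t (period t) :=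
  Nat.sInf_mem (s := {p | IsPeriodOf t p}) ⟨_, (isPeriodOf_iff ht).2
    ⟨List.length_pos_of_ne_nil ht, dvd_rfl, cyclic_periodic_length t⟩⟩

theorem period_dvd_of_periodic (ht : t ≠ []) {m : ℕ} (hm : Periodic (cyclic t) m) :
    period t ∣ m := by
  obtain ⟨hp, hps, hpt⟩ := (isPeriodOf_iff ht).1 (isPeriodOf_period ht)
  have hg : IsPeriodOf t ((period t).gcd m) := (isPeriodOf_iff ht).2
    ⟨Nat.gcd_pos_of_pos_left m hp, (Nat.gcd_dvd_left _ _).trans hps, hpt.nat_gcd hm⟩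
  have : (period t).gcd m = period t :=
    le_antisymm (Nat.le_of_dvd hp (Nat.gcd_dvd_left _ _)) (Nat.sInf_le hg)
  exact this ▸ Nat.gcd_dvd_right _ _

-- `offset t j = φ_{j+1}` for `j ≤ |t|`; past `|t|` it grows by `n` per lap of `t`.
def offset (t : List ℕ) (k : ℕ) : ℕ := ∑ i ∈ range k, (cyclic t i + 1)

@[simp] theorem offset_zero (t : List ℕ) : offset t 0 = 0 := rfl

theorem offset_succ (t : List ℕ) (k : ℕ) : offset t (k + 1) = offset t k + cyclic t k + 1 :=
  sum_range_succ _ _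

theorem offset_strictMono (t : List ℕ) : StrictMono (offset t) :=
  strictMono_nat_of_lt_succ fun k => by rw [offset_succ]; omega

theorem offset_add_of_periodic {q : ℕ} (hq : Periodic (cyclic t) q) (k : ℕ) :
    offset t (k + q) = offset t k + offset t q := by
  rw [offset, add_comm k, sum_range_add, add_comm]
  congr 1
  exact sum_congr rfl fun i _ => by rw [add_comm q, hq]

theorem offset_mul_of_periodic {q : ℕ} (hq : Periodic (cyclic t) q) (r : ℕ) :
    offset t (q * r) = r * offset t q := by
  induction r with
  | zero => simp
  | succ r ih => rw [Nat.mul_succ, offset_add_of_periodic hq, ih, Nat.succ_mul]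

theorem periodic_of_offset_add {m c : ℕ} (h : ∀ k, offset t (k + m) = offset t k + c) :
    Periodic (cyclic t) m := fun k => by
  have := h (k + 1)
  rw [add_right_comm, offset_succ, offset_succ, h] at this
  omega

theorem offset_eq_sum_take {j : ℕ} (hj : j ≤ t.length) : offset t j = (t.take j).sum + j := by
  induction j with
  | zero => simp
  | succ j ih =>
    rw [offset_succ, ih (by omega), List.sum_take_succ _ _ hj, cyclic, Nat.mod_eq_of_lt hj,
      List.getD_eq_getElem _ _ hj]
    ring

theorem phi_succ {j : ℕ} (hj : j ≤ t.length) : phi t (j + 1) = offset t j := by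
  simp [phi, offset_eq_sum_take hj]

section

variable (hn : t.sum + t.length = n)
include hn

theorem offset_length : offset t t.length = n := by
  rw [offset_eq_sum_take le_rfl, List.take_length, hn]

theorem offset_add_mul_length (j q : ℕ) : offset t (j + q * t.length) = offset t j + q * n := by
  have hq := (cyclic_periodic_length t).nat_mul q
  rw [Nat.cast_id] at hq
  rw [offset_add_of_periodic hq, mul_comm,
    offset_mul_of_periodic (cyclic_periodic_length t), offset_length hn]

end

def offsetSet (n : ℕ) (t : List ℕ) : Finset (ZMod n) :=
  (range t.length).image fun j => (offset t j : ZMod n)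

theorem coal_succ (n a : ℕ) (t : List ℕ) :
    coal n (a + 1) t = ((a : ZMod n) +ᵥ offsetSet n t).image fun z => z.val + 1 := by
  rw [coal, offsetSet, vadd_finset_def, ← image_add_one_range, image_image, image_image,
    image_image]
  refine image_congr fun j hj => ?_
  simp only [comp_apply, Nat.add_sub_cancel, phi_succ (mem_range.1 hj).le, vadd_eq_add,
    ← Nat.cast_add, ZMod.val_natCast]

section

variable (ht : t ≠ []) (hn : t.sum + t.length = n)
include ht hn

theorem natCast_mem_offsetSet_iff (x : ℕ) :
    (x : ZMod n) ∈ offsetSet n t ↔ x ∈ Set.range (offset t) := by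
  constructor
  · simp only [offsetSet, mem_image, mem_range]
    rintro ⟨j, hj, hjx⟩
    have hjn : offset t j < n := offset_length hn ▸ offset_strictMono t hj
    rw [ZMod.natCast_eq_natCast_iff', Nat.mod_eq_of_lt hjn] at hjx
    refine ⟨j + x / n * t.length, ?_⟩
    rw [offset_add_mul_length hn, hjx, Nat.mod_add_div']
  · rintro ⟨k, rfl⟩
    have hk := offset_add_mul_length hn (k % t.length) (k / t.length)
    rw [Nat.mod_add_div'] at hk
    rw [hk, Nat.cast_add, Nat.cast_mul, ZMod.natCast_self, mul_zero, add_zero]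
    exact mem_image_of_mem _ (mem_range.2 (Nat.mod_lt _ (List.length_pos_of_ne_nil ht)))

theorem vadd_offsetSet_of_periodic {m : ℕ} (hm : Periodic (cyclic t) m) :
    (offset t m : ZMod n) +ᵥ offsetSet n t = offsetSet n t := by
  refine eq_of_subset_of_card_le (fun z hz => ?_) (card_vadd_finset _ _).ge
  obtain ⟨y, hy, rfl⟩ := mem_vadd_finset.1 hz
  obtain ⟨j, -, rfl⟩ := mem_image.1 hy
  rw [vadd_eq_add, ← Nat.cast_add, add_comm, ← offset_add_of_periodic hm,
    natCast_mem_offsetSet_iff ht hn]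
  exact ⟨_, rfl⟩

theorem exists_periodic_of_vadd_offsetSet [NeZero n] {c : ZMod n}
    (hc : c +ᵥ offsetSet n t = offsetSet n t) :
    ∃ m, Periodic (cyclic t) m ∧ offset t m = c.val := by
  have hinv (x : ℕ) : x ∈ Set.range (offset t) ↔ x + c.val ∈ Set.range (offset t) := by
    rw [← natCast_mem_offsetSet_iff ht hn, ← natCast_mem_offsetSet_iff ht hn, Nat.cast_add,
      ZMod.natCast_zmod_val, add_comm, ← vadd_eq_add]
    conv_rhs => rw [← hc]
    exact (vadd_mem_vadd_finset_iff c).symm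
  obtain ⟨m, hm⟩ := (offset_strictMono t).exists_forall_add_eq_add (offset_zero t) hinv
  exact ⟨m, periodic_of_offset_add hm, by simpa using hm 0⟩

theorem vadd_offsetSet_eq_self_iff [NeZero n] (c : ZMod n) :
    c +ᵥ offsetSet n t = offsetSet n t ↔ offset t (period t) ∣ c.val := by
  have hp := ((isPeriodOf_iff ht).1 (isPeriodOf_period ht)).2.2
  constructor
  · intro hc
    obtain ⟨m, hm, hmc⟩ := exists_periodic_of_vadd_offsetSet ht hn hc
    obtain ⟨r, rfl⟩ := period_dvd_of_periodic ht hm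
    rw [← hmc, offset_mul_of_periodic hp]
    exact dvd_mul_left _ _
  · rintro ⟨r, hr⟩
    rw [← ZMod.natCast_zmod_val c, hr, mul_comm, ← offset_mul_of_periodic hp]
    exact vadd_offsetSet_of_periodic ht hn (by simpa [mul_comm] using hp.nsmul r)

theorem offset_period_mul : offset t (period t) * (t.length / period t) = n := by
  obtain ⟨-, hps, hp⟩ := (isPeriodOf_iff ht).1 (isPeriodOf_period ht)
  rw [mul_comm, ← offset_mul_of_periodic hp, Nat.mul_div_cancel' hps, offset_length hn]

theorem offset_period_dvd : offset t (period t) ∣ n :=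
  ⟨_, (offset_period_mul ht hn).symm⟩

theorem mul_period_div_length : n * period t / t.length = offset t (period t) := by
  obtain ⟨-, hps, -⟩ := (isPeriodOf_iff ht).1 (isPeriodOf_period ht)
  rw [← offset_period_mul ht hn, mul_assoc, Nat.div_mul_cancel hps,
    Nat.mul_div_cancel _ (List.length_pos_of_ne_nil ht)]

theorem coal_succ_eq_coal_succ_iff (a b : ℕ) :
    coal n (a + 1) t = coal n (b + 1) t ↔ a ≡ b [MOD offset t (period t)] := by
  have : NeZero n := ⟨by have := List.length_pos_of_ne_nil ht; omega⟩
  have hinj : Injective fun z : ZMod n => z.val + 1 :=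
    (add_left_injective 1).comp (ZMod.val_injective n)
  rw [coal_succ, coal_succ, (image_injective hinj).eq_iff, eq_comm, ← neg_vadd_eq_iff, vadd_vadd,
    vadd_offsetSet_eq_self_iff ht hn, ZMod.dvd_val_neg_add_iff_modEq (offset_period_dvd ht hn)]

end

theorem stmt19_general (n s : ℕ) (hs1 : 1 ≤ s) (hsn : s ≤ n)
    (t : List ℕ) (ht : IsIA n s t)
    (h : ℕ) (W : Finset ℕ)
    (hW : W = (Finset.range (n * period t / s)).image
      (fun k => (h + k) % n + 1)) :
    Set.InjOn (fun x => coal n x t) (W : Set ℕ) ∧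
    W.image (fun x => coal n x t) = gen n t ∧
    (gen n t).card = n * period t / s := by
  obtain ⟨rfl, hsum⟩ := ht
  have hne : t ≠ [] := List.ne_nil_of_length_pos hs1
  have hn : t.sum + t.length = n := by omega
  have hn0 : 0 < n := by omega
  have hdn := offset_period_dvd hne hn
  have key := coal_succ_eq_coal_succ_iff hne hn
  rw [mul_period_div_length hne hn] at hW ⊢
  have hW' : W = ((range (offset t (period t))).image fun k => (h + k) % n).image (· + 1) := by
    rw [hW, image_image]
    rfl
  have hgen : gen n t = (range n).image fun a => coal n (a + 1) t := by
    rw [gen, ← image_add_one_range, image_image]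
    rfl
  refine ⟨?_, ?_, ?_⟩
  · rw [hW', coe_image]
    exact Set.InjOn.image_of_comp (f := (· + 1)) (injOn_image_add_mod key hdn h)
  · rw [hW', hgen, image_image]
    exact image_image_add_mod_eq_image_range key hn0 hdn h
  · rw [hgen]
    exact card_image_range_eq key (Nat.pos_of_dvd_of_pos hdn hn0) (Nat.le_of_dvd hn0 hdn)

/-- Let `t` be a periodic increment array of size `s`
(`π(t) < s`) with stride `d = n·π(t)/s`, and let `W` be any set of `d`
agents with consecutive identifiers modulo `n`.  Then `x ↦ C(x, t)` is
injective on `W`, its image is exactly the set of all distinct coalitions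
generated by `t`, and that set has exactly `d` elements: every distinct
coalition generated by `t` is computed by exactly one agent of `W`. -/
theorem stmt19 (n s : ℕ) (hn : 1 ≤ n) (hs1 : 1 ≤ s) (hsn : s ≤ n)
    (t : List ℕ) (ht : IsIA n s t) (hper : period t < s)
    (h : ℕ) (W : Finset ℕ)
    (hW : W = (Finset.range (n * period t / s)).image
      (fun k => (h + k) % n + 1)) :
    Set.InjOn (fun x => coal n x t) (W : Set ℕ) ∧
    W.image (fun x => coal n x t) = gen n t ∧
    (gen n t).card = n * period t / s :=
  stmt19_general n s hs1 hsn t ht h W hW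

end NDCA
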